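/- For all l ≥ 1, one has a'_{l+1}/a'_l > a_{l+2}/a_{l+1} and a_{l+1}/a_l > a'_{l+2}/a'_{l+1}. -/
import Mathlib


/-- Chebyshev-type sequence: `cheb X n` is `P_{n-1}(X)`, with `P_{-1}=0`, `P_0=1`,
`P_k = X·P_{k-1} - P_{k-2}`. -/
def cheb (X : ℤ) : ℕ → ℤ
  | 0 => 0
  | 1 => 1
  | (n+2) => X * cheb X (n+1) - cheb X n

/-- `seqA c X l` is `a_l`: `a_{2k} = c·P_{k-1}(X)`, `a_{2k+1} = P_k(X)+P_{k-1}(X)`. -/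
def seqA (c X : ℤ) (l : ℕ) : ℤ :=
  if l % 2 = 0 then c * cheb X (l / 2) else cheb X (l / 2 + 1) + cheb X (l / 2)

lemma cheb_cassini (X : ℤ) (n : ℕ) :
    cheb X (n+1) ^ 2 - X * cheb X n * cheb X (n+1) + cheb X n ^ 2 = 1 := by
  induction n with
  | zero => simp [cheb]
  | succ n ih =>
    have h : cheb X (n+2) = X * cheb X (n+1) - cheb X n := rfl
    rw [h]
    linear_combination ih

lemma cheb_grow (X : ℤ) (hX : 2 ≤ X) (n : ℕ) :
    (n : ℤ) ≤ cheb X n ∧ cheb X n + 1 ≤ cheb X (n+1) := by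
  induction n with
  | zero => simp [cheb]
  | succ n ih =>
    obtain ⟨h1, h2⟩ := ih
    have h : cheb X (n+2) = X * cheb X (n+1) - cheb X n := rfl
    constructor
    · push_cast; linarith
    · rw [h]; nlinarith

lemma cheb_pos (X : ℤ) (hX : 2 ≤ X) (n : ℕ) (hn : 1 ≤ n) : 0 < cheb X n := by
  have := (cheb_grow X hX n).1
  have : (1 : ℤ) ≤ (n : ℤ) := by exact_mod_cast hn
  omega

lemma seqA_even (c X : ℤ) (k : ℕ) : seqA c X (2*k) = c * cheb X k := by
  have h1 : (2*k) % 2 = 0 := by omega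
  have h2 : (2*k) / 2 = k := by omega
  simp [seqA, h1, h2]

lemma seqA_odd (c X : ℤ) (k : ℕ) : seqA c X (2*k+1) = cheb X (k+1) + cheb X k := by
  have h1 : (2*k+1) % 2 = 1 := by omega
  have h2 : (2*k+1) / 2 = k := by omega
  simp [seqA, h1, h2]

lemma seqA_pos (c X : ℤ) (hc : 0 < c) (hX : 2 ≤ X) (l : ℕ) (hl : 1 ≤ l) :
    0 < seqA c X l := by
  rcases Nat.even_or_odd l with ⟨k, hk⟩ | ⟨k, hk⟩
  · have hk' : l = 2*k := by omega
    have hk1 : 1 ≤ k := by omega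
    rw [hk', seqA_even]
    exact mul_pos hc (cheb_pos X hX k hk1)
  · have hk' : l = 2*k+1 := by omega
    rw [hk', seqA_odd]
    have := cheb_pos X hX (k+1) (by omega)
    have := (cheb_grow X hX k).1
    omega

lemma key (c₁ c₂ X : ℤ) (hX : c₁ * c₂ = X + 2) (l : ℕ) :
    seqA c₂ X (l+1) * seqA c₁ X (l+1) = seqA c₁ X (l+2) * seqA c₂ X l + 1 := by
  rcases Nat.even_or_odd l with ⟨k, hk⟩ | ⟨k, hk⟩
  · have e0 : l = 2*k := by omega
    have e1 : l + 1 = 2*k + 1 := by omega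
    have e2 : l + 2 = 2*(k+1) := by omega
    rw [e0]
    have f1 : 2*k + 1 = 2*k + 1 := rfl
    have f2 : 2*k + 2 = 2*(k+1) := by ring
    rw [f2, seqA_odd c₂, seqA_odd c₁, seqA_even, seqA_even]
    linear_combination cheb_cassini X k - cheb X k * cheb X (k+1) * hX
  · have e0 : l = 2*k+1 := by omega
    have e1 : l + 1 = 2*(k+1) := by omega
    have e2 : l + 2 = 2*(k+1)+1 := by omega
    rw [e0]
    have f1 : 2*k + 1 + 1 = 2*(k+1) := by ring
    have f2 : 2*k + 1 + 2 = 2*(k+1) + 1 := by ring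
    rw [f1, f2, seqA_odd c₁, seqA_odd c₂, seqA_even c₂, seqA_even c₁]
    have h : cheb X (k+2) = X * cheb X (k+1) - cheb X k := rfl
    rw [h]
    linear_combination cheb_cassini X k + cheb X (k+1) ^ 2 * hX

/-- For all `l ≥ 1`, `a'_{l+1}/a'_l > a_{l+2}/a_{l+1}` and `a_{l+1}/a_l > a'_{l+2}/a'_{l+1}`. -/
theorem ratio_inequalities (c₁ c₂ : ℤ) (h₁ : 0 < c₁) (h₂ : 0 < c₂) (h4 : 4 ≤ c₁ * c₂)
    (l : ℕ) (hl : 1 ≤ l) :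
    ((seqA c₂ (c₁ * c₂ - 2) (l + 1) : ℚ) / (seqA c₂ (c₁ * c₂ - 2) l : ℚ) >
      (seqA c₁ (c₁ * c₂ - 2) (l + 2) : ℚ) / (seqA c₁ (c₁ * c₂ - 2) (l + 1) : ℚ)) ∧
    ((seqA c₁ (c₁ * c₂ - 2) (l + 1) : ℚ) / (seqA c₁ (c₁ * c₂ - 2) l : ℚ) >
      (seqA c₂ (c₁ * c₂ - 2) (l + 2) : ℚ) / (seqA c₂ (c₁ * c₂ - 2) (l + 1) : ℚ)) := by
  set X : ℤ := c₁ * c₂ - 2 with hXdef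
  have hX2 : 2 ≤ X := by omega
  have hX : c₁ * c₂ = X + 2 := by omega
  have hX' : c₂ * c₁ = X + 2 := by linarith [hX, mul_comm c₁ c₂]
  have p1 : (0:ℚ) < (seqA c₁ X l : ℚ) := by
    exact_mod_cast seqA_pos c₁ X h₁ hX2 l hl
  have p2 : (0:ℚ) < (seqA c₂ X l : ℚ) := by
    exact_mod_cast seqA_pos c₂ X h₂ hX2 l hl
  have p3 : (0:ℚ) < (seqA c₁ X (l+1) : ℚ) := by
    exact_mod_cast seqA_pos c₁ X h₁ hX2 (l+1) (by omega)
  have p4 : (0:ℚ) < (seqA c₂ X (l+1) : ℚ) := by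
    exact_mod_cast seqA_pos c₂ X h₂ hX2 (l+1) (by omega)
  constructor
  · rw [gt_iff_lt, div_lt_div_iff₀ p3 p2]
    have hkey := key c₁ c₂ X hX l
    have : seqA c₁ X (l+2) * seqA c₂ X l < seqA c₂ X (l+1) * seqA c₁ X (l+1) := by omega
    exact_mod_cast this
  · rw [gt_iff_lt, div_lt_div_iff₀ p4 p1]
    have hkey := key c₂ c₁ X hX' l
    have : seqA c₂ X (l+2) * seqA c₁ X l < seqA c₁ X (l+1) * seqA c₂ X (l+1) := by omega
    exact_mod_cast this
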